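/- In the Artin-Schreier tower over F_p, for every i ≥ 0 and every m ≥ 1, one has c_i^m ∈ L_{i-1} if and only if c_i^(m(N_i - (p^(p^i) - 1))) = a_{i-1}^m. -/

import Mathlib

/-!
Put `q = p ^ p ^ i` and `ε = (-1) ^ i`. The heart of the proof is the identity
`c_i ^ q = c_i + ε`, i.e. `Tr_{L_{i-1}/𝔽_p} a_{i-1} = ε`: it is proved by induction on `i`,
using `a_i = a_{i-1} c_i ^ (p - 1)`, the conjugates `c_i + w ε` of `c_i` over `L_{i-1}` and
`∑_{w ∈ 𝔽_p} (x + w) ^ (p - 1) = -1`. It gives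
`c_i ^ N_i = ∏_w (c_i + w ε) = c_i ^ p - c_i = a_{i-1}`, and it shows that the Frobenius orbit
of `c_{i-1}` has length `p ^ i`, which divides `[L_{i-1} : 𝔽_p]`; hence `L_{i-1}` is exactly the
set of roots of `X ^ q - X`. So `c_i ^ m ∈ L_{i-1}` iff `(c_i ^ m) ^ (q - 1) = 1` iff
`c_i ^ (m (N_i - (q - 1))) = c_i ^ (m N_i) = a_{i-1} ^ m`.
-/

open Finset Polynomial

theorem ZMod.prod_range_eq_prod_val {M : Type*} [CommMonoid M] (n : ℕ) [NeZero n] (f : ℕ → M) :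
    ∏ w ∈ range n, f w = ∏ t : ZMod n, f t.val := by
  obtain ⟨n, rfl⟩ : ∃ m, n = m + 1 := ⟨n - 1, (Nat.succ_pred_eq_of_ne_zero (NeZero.ne n)).symm⟩
  exact (Fin.prod_univ_eq_prod_range f _).symm

theorem pow_pow_eq_self {M : Type*} [Monoid M] {x : M} {a : ℕ} (h : x ^ a = x) (w : ℕ) :
    x ^ a ^ w = x := by
  have := Function.IsFixedPt.iterate (f := fun y : M => y ^ a) h w
  rwa [Function.IsFixedPt, pow_iterate] at this

theorem pow_sub_eq_pow_iff {G₀ : Type*} [GroupWithZero G₀] {x : G₀} (hx : x ≠ 0) {m n : ℕ}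
    (h : n ≤ m) : x ^ (m - n) = x ^ m ↔ x ^ n = 1 := by
  rw [pow_sub₀ x hx h, mul_eq_left₀ (pow_ne_zero m hx), inv_eq_one]

theorem mem_rootSet_X_pow_sub_X {K : Type*} [Field K] {n : ℕ} (hn : 1 < n) {x : K} :
    x ∈ (X ^ n - X : K[X]).rootSet K ↔ x ^ n = x := by
  simp [mem_rootSet, FiniteField.X_pow_card_sub_X_ne_zero K hn, sub_eq_zero]

theorem Subalgebra.pow_natCard_eq_self {R K : Type*} [CommRing R] [Field K] [Algebra R K]
    (L : Subalgebra R K) [Finite L] {x : K} (hx : x ∈ L) : x ^ Nat.card L = x := by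
  let : Field L := (Finite.isField_of_domain L).toField
  have := Fintype.ofFinite L
  simpa [Nat.card_eq_fintype_card] using
    congrArg Subtype.val (FiniteField.pow_card (⟨x, hx⟩ : L))

section CharacteristicP

variable {p : ℕ}

section ExpChar

variable {R : Type*} [CommSemiring R] [ExpChar R p]

theorem pow_pow_mul_eq_add_sum {x y : R} {n : ℕ} (h : x ^ p ^ n = x + y) (k : ℕ) :
    x ^ p ^ (n * k) = x + ∑ l ∈ range k, y ^ p ^ (n * l) := by
  induction k with
  | zero => simp
  | succ k ih =>
    rw [mul_add_one, pow_add, pow_mul, ih, add_pow_expChar_pow, sum_pow_char_pow, h,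
      sum_range_succ', mul_zero, pow_zero, pow_one]
    simp_rw [← pow_mul, ← pow_add, mul_add_one]
    ring

theorem pow_pow_mul_eq_add_natCast_mul {x e : R} {n : ℕ} (he : e ^ p = e)
    (h : x ^ p ^ n = x + e) (t : ℕ) : x ^ p ^ (n * t) = x + t * e := by
  simp [pow_pow_mul_eq_add_sum h, pow_pow_eq_self he]

end ExpChar

section ZMod

variable [Fact p.Prime]

theorem ZMod.prod_X_sub_C : ∏ t : ZMod p, (X - C t) = X ^ p - X := by
  have hroots : (X ^ p - X : (ZMod p)[X]).roots = univ.val := by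
    simpa [ZMod.card] using FiniteField.roots_X_pow_card_sub_X (ZMod p)
  have hmonic : (X ^ p - X : (ZMod p)[X]).Monic :=
    monic_X_pow_sub (by simpa using (Fact.out : p.Prime).one_lt)
  rw [(GaloisField.splits_zmod_X_pow_sub_X p).eq_prod_roots_of_monic hmonic, hroots]
  rfl

theorem ZMod.prod_range_X_add_natCast : ∏ w ∈ range p, (X + (w : (ZMod p)[X])) = X ^ p - X := by
  rw [← ZMod.prod_X_sub_C, ZMod.prod_range_eq_prod_val]
  refine Fintype.prod_equiv (Equiv.neg (ZMod p)) _ _ fun t => ?_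
  rw [← map_natCast C, ZMod.natCast_val, ZMod.cast_id', id, Equiv.neg_apply, map_neg,
    sub_neg_eq_add]

theorem ZMod.sum_range_X_add_natCast_pow_sub_one :
    ∑ w ∈ range p, (X + (w : (ZMod p)[X])) ^ (p - 1) = -1 := by
  classical
  have hp := (Fact.out : p.Prime).one_lt
  have hcofactor : ∀ w ∈ range p,
      ∏ u ∈ (range p).erase w, (X + (u : (ZMod p)[X])) =
        (X + (w : (ZMod p)[X])) ^ (p - 1) - 1 := by
    intro w hw
    have hne : X + (w : (ZMod p)[X]) ≠ 0 := by rw [← map_natCast C]; exact X_add_C_ne_zero _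
    refine mul_left_cancel₀ hne ?_
    rw [mul_prod_erase (range p) (fun u : ℕ => X + (u : (ZMod p)[X])) hw,
      ZMod.prod_range_X_add_natCast, mul_sub, ← pow_succ', Nat.sub_add_cancel hp.le, add_pow_char,
      ← map_natCast C, ← map_pow, ZMod.pow_card]
    ring
  have := congrArg derivative (ZMod.prod_range_X_add_natCast (p := p))
  rw [derivative_prod_finset, sum_congr rfl fun w hw => by rw [hcofactor w hw]] at this
  simpa [derivative_X_pow] using this

end ZMod

section CharP

variable [Fact p.Prime] {R : Type*} [CommRing R] [CharP R p]

theorem prod_range_add_natCast (x : R) : ∏ w ∈ range p, (x + w) = x ^ p - x := by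
  simpa using congrArg (eval₂RingHom (ZMod.castHom dvd_rfl R) x) ZMod.prod_range_X_add_natCast

theorem sum_range_add_natCast_pow_sub_one (x : R) : ∑ w ∈ range p, (x + w) ^ (p - 1) = -1 := by
  simpa [eval₂_pow] using congrArg (eval₂RingHom (ZMod.castHom dvd_rfl R) x)
    ZMod.sum_range_X_add_natCast_pow_sub_one

theorem neg_one_pow_pow_char (i : ℕ) : ((-1 : R) ^ i) ^ p = (-1) ^ i := by
  rw [pow_right_comm, neg_one_pow_char]

theorem pow_pow_pow_eq_self_of_lt {x : R} {l i : ℕ} (h : x ^ p ^ p ^ l = x + (-1) ^ l)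
    (hl : l < i) : x ^ p ^ p ^ i = x := by
  have := pow_pow_mul_eq_add_natCast_mul (neg_one_pow_pow_char l) h (p ^ (i - l))
  rwa [← pow_add, Nat.add_sub_cancel' hl.le, Nat.cast_pow, CharP.cast_eq_zero,
    zero_pow (by omega), zero_mul, add_zero] at this

end CharP

section Field

variable [Fact p.Prime] {K : Type*} [Field K] [CharP K p]

theorem prod_range_add_natCast_mul (x : K) {e : K} (he0 : e ≠ 0) (hep : e ^ p = e) :
    ∏ w ∈ range p, (x + w * e) = x ^ p - x := by
  calc ∏ w ∈ range p, (x + w * e) = ∏ w ∈ range p, e * (x / e + w) := by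
        refine prod_congr rfl fun w _ => ?_; field_simp
    _ = e ^ p * ((x / e) ^ p - x / e) := by
        rw [prod_mul_distrib, prod_const, card_range, prod_range_add_natCast]
    _ = x ^ p - x := by
        rw [mul_sub, ← mul_pow, mul_div_cancel₀ _ he0, hep, mul_div_cancel₀ _ he0]

theorem sum_range_add_natCast_mul_pow_sub_one (x : K) {e : K} (he0 : e ≠ 0) (hep : e ^ p = e) :
    ∑ w ∈ range p, (x + w * e) ^ (p - 1) = -1 := by
  have he : e ^ (p - 1) = 1 := mul_right_cancel₀ he0 <| by
    rw [← pow_succ, Nat.sub_add_cancel (Fact.out : p.Prime).one_lt.le, hep, one_mul]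
  calc ∑ w ∈ range p, (x + w * e) ^ (p - 1)
      = ∑ w ∈ range p, e ^ (p - 1) * (x / e + w) ^ (p - 1) := by
        refine sum_congr rfl fun w _ => ?_; rw [← mul_pow]; field_simp
    _ = -1 := by rw [← mul_sum, sum_range_add_natCast_pow_sub_one, he, mul_neg_one]

end Field

section Adjoin

variable [Fact p.Prime] {K : Type*} [CommRing K] [Algebra (ZMod p) K] [CharP K p]

theorem pow_pow_eq_self_of_mem_adjoin {s : Set K} {n : ℕ} (hs : ∀ y ∈ s, y ^ p ^ n = y)
    {x : K} (hx : x ∈ Algebra.adjoin (ZMod p) s) : x ^ p ^ n = x := by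
  induction hx using Algebra.adjoin_induction with
  | mem y hy => exact hs y hy
  | algebraMap r => rw [← map_pow, ZMod.pow_card_pow]
  | add u v _ _ hu hv => rw [add_pow_char_pow, hu, hv]
  | mul u v _ _ hu hv => rw [mul_pow, hu, hv]

end Adjoin

section Tower

variable {K : Type*} [CommRing K]

/-- `artinSchreierCoeff p c i` is the paper's `a_{i-1}` (the factor `c_{-1} = 1` is dropped). -/
def artinSchreierCoeff (p : ℕ) (c : ℕ → K) (i : ℕ) : K := (∏ j ∈ range i, c j) ^ (p - 1)

def IsArtinSchreierTower (p : ℕ) (c : ℕ → K) : Prop :=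
  ∀ i, c i ^ p - c i = artinSchreierCoeff p c i

theorem artinSchreierCoeff_succ (c : ℕ → K) (i : ℕ) :
    artinSchreierCoeff p c (i + 1) = artinSchreierCoeff p c i * c i ^ (p - 1) := by
  rw [artinSchreierCoeff, artinSchreierCoeff, prod_range_succ, mul_pow]

theorem IsArtinSchreierTower.pow_eq_add {c : ℕ → K} (hc : IsArtinSchreierTower p c) (i : ℕ) :
    c i ^ p = c i + artinSchreierCoeff p c i :=
  sub_eq_iff_eq_add'.mp (hc i)

end Tower

namespace IsArtinSchreierTower

variable [Fact p.Prime] {K : Type*} [Field K] [CharP K p] {c : ℕ → K}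

theorem pow_char_pow (hc : IsArtinSchreierTower p c) (i k : ℕ) :
    c i ^ p ^ k = c i + ∑ l ∈ range k, artinSchreierCoeff p c i ^ p ^ l := by
  simpa using pow_pow_mul_eq_add_sum (n := 1) (by rw [pow_one]; exact hc.pow_eq_add i) k

theorem pow_pow_pow_eq_add_neg_one_pow_succ (hc : IsArtinSchreierTower p c) {j : ℕ}
    (hj : ∀ l ≤ j, c l ^ p ^ p ^ l = c l + (-1) ^ l) :
    c (j + 1) ^ p ^ p ^ (j + 1) = c (j + 1) + (-1) ^ (j + 1) := by
  set a := artinSchreierCoeff p c j with ha_def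
  have ha : ∀ w, a ^ p ^ (p ^ j * w) = a := fun w => by
    refine pow_mul p (p ^ j) w ▸ pow_pow_eq_self ?_ w
    rw [ha_def, artinSchreierCoeff, pow_right_comm, ← prod_pow]
    exact congrArg (· ^ (p - 1)) <| prod_congr rfl fun l hl =>
      pow_pow_pow_eq_self_of_lt (hj l (mem_range.mp hl).le) (mem_range.mp hl)
  have hconj : ∀ w : ℕ, artinSchreierCoeff p c (j + 1) ^ p ^ (p ^ j * w) =
      a * (c j + w * (-1) ^ j) ^ (p - 1) := fun w => by
    rw [artinSchreierCoeff_succ, mul_pow, ha, pow_right_comm,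
      pow_pow_mul_eq_add_natCast_mul (neg_one_pow_pow_char j) (hj j le_rfl)]
  have htrace : ∑ u ∈ range (p ^ j), a ^ p ^ u = (-1) ^ j := by
    simpa [hj j le_rfl] using (hc.pow_char_pow j (p ^ j)).symm
  -- `p ^ (j + 1)` Frobenius steps make `p` blocks of `p ^ j` steps; across the blocks `a` is
  -- fixed while `c j` runs through its conjugates `c j + w * (-1) ^ j`.
  calc c (j + 1) ^ p ^ p ^ (j + 1)
      = c (j + 1) + ∑ w ∈ range p,
          (∑ u ∈ range (p ^ j), artinSchreierCoeff p c (j + 1) ^ p ^ u) ^ p ^ (p ^ j * w) := by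
        rw [← pow_pow_mul_eq_add_sum (hc.pow_char_pow (j + 1) (p ^ j)), pow_succ]
    _ = c (j + 1) + ∑ u ∈ range (p ^ j), (∑ w ∈ range p,
          artinSchreierCoeff p c (j + 1) ^ p ^ (p ^ j * w)) ^ p ^ u := by
        simp_rw [sum_pow_char_pow, pow_right_comm _ (p ^ _) (p ^ _)]
        rw [sum_comm]
    _ = c (j + 1) + ∑ u ∈ range (p ^ j), (-a) ^ p ^ u := by
        have he0 : (-1 : K) ^ j ≠ 0 := pow_ne_zero _ (neg_ne_zero.mpr one_ne_zero)
        simp_rw [hconj, ← mul_sum,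
          sum_range_add_natCast_mul_pow_sub_one _ he0 (neg_one_pow_pow_char j), mul_neg_one]
    _ = c (j + 1) + (-1) ^ (j + 1) := by
        simp_rw [neg_pow (a := a), neg_one_pow_char_pow, neg_one_mul, sum_neg_distrib, htrace,
          pow_succ, mul_neg_one]

theorem pow_pow_pow_eq_add_neg_one_pow (hc : IsArtinSchreierTower p c) (i : ℕ) :
    c i ^ p ^ p ^ i = c i + (-1) ^ i := by
  induction i using Nat.strong_induction_on with
  | _ i ih =>
    cases i with
    | zero => simp [hc.pow_eq_add, artinSchreierCoeff]
    | succ j => exact hc.pow_pow_pow_eq_add_neg_one_pow_succ fun l hl => ih l (Nat.lt_succ_of_le hl)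

theorem pow_pow_pow_of_lt (hc : IsArtinSchreierTower p c) {l i : ℕ} (hl : l < i) :
    c l ^ p ^ p ^ i = c l :=
  pow_pow_pow_eq_self_of_lt (hc.pow_pow_pow_eq_add_neg_one_pow l) hl

theorem ne_zero (hc : IsArtinSchreierTower p c) (i : ℕ) : c i ≠ 0 := by
  intro h
  have := hc.pow_pow_pow_eq_add_neg_one_pow i
  rw [h, zero_pow (pow_ne_zero _ (Fact.out : p.Prime).ne_zero), zero_add] at this
  exact pow_ne_zero i (neg_ne_zero.mpr one_ne_zero) this.symm

theorem pow_geom_sum_eq_coeff (hc : IsArtinSchreierTower p c) (i : ℕ) :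
    c i ^ ∑ v ∈ range p, (p ^ p ^ i) ^ v = artinSchreierCoeff p c i := by
  rw [← prod_pow_eq_pow_sum]
  simp_rw [← pow_mul, pow_pow_mul_eq_add_natCast_mul (neg_one_pow_pow_char i)
    (hc.pow_pow_pow_eq_add_neg_one_pow i)]
  rw [prod_range_add_natCast_mul _ (pow_ne_zero _ (neg_ne_zero.mpr one_ne_zero))
    (neg_one_pow_pow_char i), hc i]

theorem pow_char_pow_eq_self_iff (hc : IsArtinSchreierTower p c) (j k : ℕ) :
    c j ^ p ^ k = c j ↔ p ^ (j + 1) ∣ k := by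
  have hperiodic : ∀ k, Function.IsPeriodicPt (· ^ p) k (c j) ↔ c j ^ p ^ k = c j := fun k => by
    rw [Function.IsPeriodicPt, Function.IsFixedPt, pow_iterate]
  have hconj := pow_pow_mul_eq_add_natCast_mul (neg_one_pow_pow_char j)
    (hc.pow_pow_pow_eq_add_neg_one_pow j)
  have hmin : Function.minimalPeriod (· ^ p) (c j) = p ^ (j + 1) := by
    refine Nat.eq_prime_pow_of_dvd_least_prime_pow Fact.out ?_ ?_ <;>
      rw [← Function.isPeriodicPt_iff_minimalPeriod_dvd, hperiodic]
    · simp [hc.pow_pow_pow_eq_add_neg_one_pow j]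
    · simpa [pow_succ] using hconj p
  rw [← hperiodic, Function.isPeriodicPt_iff_minimalPeriod_dvd, hmin]

end IsArtinSchreierTower

theorem IsArtinSchreierTower.mem_adjoin_iff_pow_pow_pow_eq_self [Fact p.Prime] {K : Type*} [Field K]
    [Algebra (ZMod p) K] [CharP K p] {c : ℕ → K} (hc : IsArtinSchreierTower p c) (i : ℕ)
    {x : K} :
    x ∈ Algebra.adjoin (ZMod p) {y | ∃ j < i, y = c j} ↔ x ^ p ^ p ^ i = x := by
  -- `L` lies in the root set `F` of `X ^ p ^ p ^ i - X`, and `p ^ p ^ i ≤ |L|` because the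
  -- Frobenius orbit of `c (i - 1)` has length `p ^ i`, which divides `[L : 𝔽_p]`.
  set L := Algebra.adjoin (ZMod p) {y | ∃ j < i, y = c j}
  have hp : p.Prime := Fact.out
  have hq : 1 < p ^ p ^ i := Nat.one_lt_pow (pow_pos hp.pos i).ne' hp.one_lt
  set F := (X ^ p ^ p ^ i - X : K[X]).rootSet K
  have hLF : (L : Set K) ⊆ F := fun y hy => (mem_rootSet_X_pow_sub_X hq).mpr <|
    pow_pow_eq_self_of_mem_adjoin (by rintro _ ⟨j, hj, rfl⟩; exact hc.pow_pow_pow_of_lt hj) hy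
  have : Finite L := (rootSet_finite _ K).subset hLF
  have hcardL : Nat.card L = p ^ Module.finrank (ZMod p) L := by
    rw [Module.natCard_eq_pow_finrank (K := ZMod p), Nat.card_zmod]
  have hdvd : p ^ i ∣ Module.finrank (ZMod p) L := by
    cases i with
    | zero => exact (pow_zero p).symm ▸ one_dvd _
    | succ j =>
      refine (hc.pow_char_pow_eq_self_iff j _).mp ?_
      rw [← hcardL]
      exact L.pow_natCard_eq_self (Algebra.subset_adjoin ⟨j, j.lt_succ_self, rfl⟩)
  have hqL : p ^ p ^ i ≤ Nat.card L := hcardL ▸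
    Nat.pow_le_pow_right hp.pos (Nat.le_of_dvd Module.finrank_pos hdvd)
  have hLeqF : (L : Set K) = F := Set.eq_of_subset_of_ncard_le hLF
    ((ncard_rootSet_le _ K).trans ((FiniteField.X_pow_card_sub_X_natDegree_eq K hq).trans_le
      (hqL.trans_eq (Nat.card_coe_set_eq (L : Set K)).symm))) (rootSet_finite _ K)
  rw [← SetLike.mem_coe, hLeqF, mem_rootSet_X_pow_sub_X hq]

end CharacteristicP

theorem c_pow_mem_iff_general (p : ℕ) [Fact p.Prime]
    (c : ℕ → AlgebraicClosure (ZMod p))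
    (hc : ∀ i, c i ^ p - c i = (∏ j ∈ Finset.range i, c j) ^ (p - 1))
    (i : ℕ) (m : ℕ) :
    c i ^ m ∈ Algebra.adjoin (ZMod p) {x | ∃ j < i, x = c j} ↔
      c i ^ (m * ((∑ j ∈ Finset.range p, (p ^ p ^ i) ^ j) - (p ^ p ^ i - 1))) =
        ((∏ j ∈ Finset.range i, c j) ^ (p - 1)) ^ m := by
  have hc : IsArtinSchreierTower p c := hc
  have hp : p.Prime := Fact.out
  set q := p ^ p ^ i
  set N := ∑ j ∈ range p, q ^ j
  have hq : 1 ≤ q := Nat.one_le_pow _ _ hp.pos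
  have hqN : q - 1 ≤ N := (Nat.sub_le q 1).trans <|
    (pow_one q).symm.trans_le (single_le_sum (fun _ _ => Nat.zero_le _) (mem_range.mpr hp.one_lt))
  have hx : c i ^ m ≠ 0 := pow_ne_zero m (hc.ne_zero i)
  calc c i ^ m ∈ Algebra.adjoin (ZMod p) {x | ∃ j < i, x = c j} ↔ (c i ^ m) ^ q = c i ^ m :=
        hc.mem_adjoin_iff_pow_pow_pow_eq_self i
    _ ↔ (c i ^ m) ^ (q - 1) = 1 := by
        rw [← pow_sub_eq_pow_iff hx (Nat.sub_le q 1), Nat.sub_sub_self hq, pow_one, eq_comm]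
    _ ↔ (c i ^ m) ^ (N - (q - 1)) = (c i ^ m) ^ N := (pow_sub_eq_pow_iff hx hqN).symm
    _ ↔ _ := by rw [← pow_mul, pow_right_comm, hc.pow_geom_sum_eq_coeff]; rfl

theorem c_pow_mem_iff (p : ℕ) [Fact p.Prime]
    (c : ℕ → AlgebraicClosure (ZMod p))
    (hc : ∀ i, c i ^ p - c i = (∏ j ∈ Finset.range i, c j) ^ (p - 1))
    (i : ℕ) (m : ℕ) (hm : 1 ≤ m) :
    c i ^ m ∈ Algebra.adjoin (ZMod p) {x | ∃ j < i, x = c j} ↔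
      c i ^ (m * ((∑ j ∈ Finset.range p, (p ^ p ^ i) ^ j) - (p ^ p ^ i - 1))) =
        ((∏ j ∈ Finset.range i, c j) ^ (p - 1)) ^ m :=
  c_pow_mem_iff_general p c hc i m
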